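/- arXiv:2101.07607 — 3 statements merged into one kernel-verified Lean document; each statement's English description precedes it below -/
import Mathlib

section
/- The function f(t) = e^{-t} / (-log(1 - e^{-t})) is nondecreasing on (0, ∞). -/
/-!
With `y = 1 - e^{-t}` the function equals `(1 - y) / (-log y)`, the reciprocal of the slope of the
chord of `log` between `y` and `1`. By concavity of `log` that slope is positive and decreases as
`y` increases, and `y` increases with `t`.
-/

open Real Set

lemma div_neg_log_one_sub_eq_inv_slope_log (x : ℝ) :
    x / (-log (1 - x)) = (slope log 1 (1 - x))⁻¹ := by
  rw [slope_def_field, log_one, sub_zero, inv_div, sub_sub_cancel_left, div_neg, neg_div]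

lemma slope_log_one_pos {y : ℝ} (hy : y ∈ Ioo 0 1) : 0 < slope log 1 y := by
  rw [slope_def_field, log_one, sub_zero]
  exact div_pos_of_neg_of_neg (log_neg hy.1 hy.2) (by linarith [hy.2])

lemma antitoneOn_slope_log_one : AntitoneOn (slope log 1) (Ioo 0 1) :=
  strictConcaveOn_log_Ioi.concaveOn.antitoneOn_slope_lt (mem_Ioi.2 one_pos)

lemma one_sub_exp_neg_mem_Ioo {t : ℝ} (ht : 0 < t) : 1 - exp (-t) ∈ Ioo 0 1 :=
  ⟨by linarith [Real.exp_lt_one_iff.2 (neg_lt_zero.2 ht)], by linarith [exp_pos (-t)]⟩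

theorem f_monotoneOn :
    MonotoneOn (fun t : ℝ => Real.exp (-t) / (-Real.log (1 - Real.exp (-t))))
      (Set.Ioi 0) := by
  intro a ha b hb hab
  simp only [div_neg_log_one_sub_eq_inv_slope_log]
  have hya := one_sub_exp_neg_mem_Ioo ha
  have hyb := one_sub_exp_neg_mem_Ioo hb
  have hy : 1 - exp (-a) ≤ 1 - exp (-b) := by gcongr
  exact inv_anti₀ (slope_log_one_pos hyb) (antitoneOn_slope_log_one hya hyb hy)
end

section
/- As t → ∞, 1 - f(t) is asymptotically equivalent to e^{-t}/2, i.e. lim_{t→∞} (1 - f(t)) / (e^{-t}/2) = 1, where f(t) = e^{-t} / (-log(1 - e^{-t})). -/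
/-!
With `L x = -log (1 - x) = x + x ^ 2 / 2 + O(x ^ 3)` we have `L ~ x` and `L - x ~ x ^ 2 / 2` as
`x → 0`, hence `1 - x / L = (L - x) / L ~ (x ^ 2 / 2) / x = x / 2`; then substitute `x = e⁻ᵗ → 0`.
-/

open Real Filter Finset Asymptotics Topology

lemma neg_log_one_sub_sub_sum_range_isBigO_pow (n : ℕ) :
    (fun x : ℝ ↦ -log (1 - x) - ∑ i ∈ range n, x ^ (i + 1) / (i + 1)) =O[𝓝 0]
      (· ^ (n + 1)) := by
  refine .of_bound 2 ?_
  filter_upwards [Metric.ball_mem_nhds (0 : ℝ) one_half_pos] with x hx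
  rw [mem_ball_zero_iff, norm_eq_abs] at hx
  calc ‖-log (1 - x) - ∑ i ∈ range n, x ^ (i + 1) / (i + 1)‖
      = |(∑ i ∈ range n, x ^ (i + 1) / (i + 1)) + log (1 - x)| := by
        rw [norm_eq_abs, ← abs_neg]; ring_nf
    _ ≤ |x| ^ (n + 1) / (1 - |x|) := abs_log_sub_add_sum_range_le (hx.trans one_half_lt_one) n
    _ ≤ 2 * ‖x ^ (n + 1)‖ := by
        rw [norm_pow, norm_eq_abs, div_le_iff₀ (by linarith)]
        nlinarith [pow_nonneg (abs_nonneg x) (n + 1)]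

lemma neg_log_one_sub_sub_sum_range_isEquivalent (n : ℕ) :
    (fun x : ℝ ↦ -log (1 - x) - ∑ i ∈ range n, x ^ (i + 1) / (i + 1)) ~[𝓝 0]
      fun x ↦ x ^ (n + 1) / (n + 1) := by
  have h := (neg_log_one_sub_sub_sum_range_isBigO_pow (n + 1)).trans_isLittleO
    (isLittleO_pow_pow (𝕜 := ℝ) (n + 1).lt_succ_self)
  refine IsLittleO.isEquivalent <| (h.congr_left fun x ↦ ?_).trans_isBigO <|
    (isBigO_self_const_mul (c := ((n : ℝ) + 1)⁻¹) (by positivity) _ _).congr_right fun x ↦ ?_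
  · simp only [Pi.sub_apply, sum_range_succ]; ring
  · ring

theorem one_sub_f_asymptotic :
    Tendsto (fun t : ℝ =>
        (1 - Real.exp (-t) / (-Real.log (1 - Real.exp (-t)))) / (Real.exp (-t) / 2))
      atTop (nhds 1) := by
  have hexp := tendsto_exp_neg_atTop_nhds_zero
  have hlog : (fun t ↦ -log (1 - exp (-t))) ~[atTop] fun t ↦ exp (-t) := by
    simpa [Function.comp_def] using
      (neg_log_one_sub_sub_sum_range_isEquivalent 0).comp_tendsto hexp
  have hlog_sub :
      (fun t ↦ -log (1 - exp (-t)) - exp (-t)) ~[atTop] fun t ↦ exp (-t) ^ 2 / 2 := by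
    simpa [Function.comp_def, one_add_one_eq_two] using
      (neg_log_one_sub_sub_sum_range_isEquivalent 1).comp_tendsto hexp
  have hlog_ne : ∀ᶠ t in atTop, -log (1 - exp (-t)) ≠ 0 := by
    filter_upwards [eventually_gt_atTop 0] with t ht
    have hexp_lt : exp (-t) < 1 := exp_lt_one_iff.2 (neg_neg_of_pos ht)
    exact (neg_pos.2 (log_neg (by linarith) (by linarith [exp_pos (-t)]))).ne'
  have key : (fun t ↦ 1 - exp (-t) / -log (1 - exp (-t))) ~[atTop] fun t ↦ exp (-t) / 2 := by
    refine (hlog_sub.div hlog).congr_left ?_ |>.congr_right ?_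
    · filter_upwards [hlog_ne] with t ht
      rw [Pi.div_apply, sub_div, div_self ht]
    · filter_upwards with t
      rw [Pi.div_apply]
      field_simp
  exact (isEquivalent_iff_tendsto_one (.of_forall fun t ↦ by positivity)).1 key
end

section
/- The integral ∫_0^∞ (1 - f(t)) dt equals the Euler–Mascheroni constant γ, where f(t) = e^{-t} / (-log(1 - e^{-t})). -/
open Real Set MeasureTheory Filter Topology

/-!
The substitution `t = -log (1 - e^{-x})` is an involution of `(0, ∞)` with
`|dt/dx| = e^{-x} / (1 - e^{-x})`; it turns the integral into `T(1)`, where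
`T(s) = ∫₀^∞ e^{-sx} K(x) dx` and `K(x) = 1 / (1 - e^{-x}) - 1 / x`.
Since `(1 - e^{-x}) K(x) = 1 - (1 - e^{-x}) / x`, Frullani's integral gives
`T(s) - T(s + 1) = 1 / s - log ((s + 1) / s)`, which telescopes to
`T(1) - T(n + 1) = H_n - log (n + 1)`. As `0 ≤ K ≤ 1`, `0 ≤ T(n + 1) ≤ 1 / (n + 1)`,
and letting `n → ∞` yields `T(1) = γ`.
-/

lemma integral_exp_neg_mul_Ioi_zero {s : ℝ} (hs : 0 < s) :
    ∫ x in Ioi (0 : ℝ), exp (-s * x) = s⁻¹ := by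
  rw [integral_exp_mul_Ioi (neg_neg_of_pos hs)]
  simp

lemma integrableOn_inv_mul_exp_neg_mul_sub {a b : ℝ} (ha : 0 < a) (hb : 0 < b) :
    IntegrableOn (fun x => x⁻¹ * (exp (-a * x) - exp (-b * x))) (Ioi 0) := by
  wlog hab : a ≤ b generalizing a b
  · refine (this hb ha (le_of_not_ge hab)).neg.congr_fun (fun x _ => ?_) measurableSet_Ioi
    simp only [Pi.neg_apply]
    ring
  refine ((exp_neg_integrableOn_Ioi 0 ha).const_mul (b - a)).mono' ?_ ?_
  · exact ContinuousOn.aestronglyMeasurable (by fun_prop (disch := exact fun x hx => ne_of_gt hx))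
      measurableSet_Ioi
  · filter_upwards [ae_restrict_mem measurableSet_Ioi] with x (hx : 0 < x)
    -- `e^{-ax} - e^{-bx} = e^{-ax} (1 - e^{-(b-a)x})` and `1 - e^{-y} ≤ y`
    have hsplit : exp (-b * x) = exp (-a * x) * exp (-((b - a) * x)) := by
      rw [← exp_add]; ring_nf
    have hlow := one_sub_le_exp_neg ((b - a) * x)
    have hup : exp (-((b - a) * x)) ≤ 1 := exp_le_one_iff.2 (by nlinarith)
    have hpos := exp_pos (-a * x)
    rw [norm_mul, norm_inv, Real.norm_of_nonneg hx.le, Real.norm_of_nonneg (by nlinarith),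
      inv_mul_le_iff₀ hx]
    nlinarith

lemma integral_inv_mul_exp_neg_mul_sub {a b : ℝ} (ha : 0 < a) (hb : 0 < b) :
    ∫ x in Ioi 0, x⁻¹ * (exp (-a * x) - exp (-b * x)) = log (b / a) := by
  have hcont : Continuous fun x : ℝ => exp (-x) := by fun_prop
  have h := Frullani.integral_Ioi_eq (L := 1) (R := 0)
    (hcont.locallyIntegrable.locallyIntegrableOn _) ha hb
    (by simpa using (hcont.tendsto 0).mono_left nhdsWithin_le_nhds)
    tendsto_exp_neg_atTop_nhds_zero
    (by simpa only [neg_mul, smul_eq_mul] using integrableOn_inv_mul_exp_neg_mul_sub ha hb)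
  simpa only [neg_mul, smul_eq_mul, sub_zero, mul_one] using h

lemma one_sub_exp_neg_pos {x : ℝ} (hx : 0 < x) : 0 < 1 - exp (-x) := by
  simpa using exp_lt_one_iff.2 (neg_neg_of_pos hx)

noncomputable def eulerKernel (x : ℝ) : ℝ := (1 - exp (-x))⁻¹ - x⁻¹

lemma eulerKernel_nonneg {x : ℝ} (hx : 0 < x) : 0 ≤ eulerKernel x :=
  sub_nonneg.2 <| inv_anti₀ (one_sub_exp_neg_pos hx) (by linarith [one_sub_le_exp_neg x])

lemma eulerKernel_le_one {x : ℝ} (hx : 0 < x) : eulerKernel x ≤ 1 := by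
  have hpos := one_sub_exp_neg_pos hx
  have hmul : (x + 1) * exp (-x) ≤ 1 := by
    calc (x + 1) * exp (-x) ≤ exp x * exp (-x) := by gcongr; exact add_one_le_exp x
      _ = 1 := by rw [← exp_add, add_neg_cancel, exp_zero]
  have hdiv : exp (-x) ≤ x⁻¹ * (1 - exp (-x)) := by
    rw [le_inv_mul_iff₀ hx]; linarith
  rw [eulerKernel, sub_le_iff_le_add, inv_le_iff_one_le_mul₀ hpos]
  linarith [add_mul 1 x⁻¹ (1 - exp (-x))]

lemma continuousOn_eulerKernel : ContinuousOn eulerKernel (Ioi 0) := by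
  refine ContinuousOn.sub (ContinuousOn.inv₀ (by fun_prop) fun x hx => (one_sub_exp_neg_pos hx).ne')
    (continuousOn_inv₀.mono fun x (hx : 0 < x) => hx.ne')

lemma integrableOn_exp_neg_mul_eulerKernel {s : ℝ} (hs : 0 < s) :
    IntegrableOn (fun x => exp (-s * x) * eulerKernel x) (Ioi 0) := by
  refine (exp_neg_integrableOn_Ioi 0 hs).mono'
    ((by fun_prop : Continuous fun x => exp (-s * x)).continuousOn.mul continuousOn_eulerKernel
      |>.aestronglyMeasurable measurableSet_Ioi) ?_
  filter_upwards [ae_restrict_mem measurableSet_Ioi] with x (hx : 0 < x)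
  rw [norm_mul, Real.norm_of_nonneg (exp_pos _).le, Real.norm_of_nonneg (eulerKernel_nonneg hx)]
  exact mul_le_of_le_one_right (exp_pos _).le (eulerKernel_le_one hx)

noncomputable def eulerTransform (s : ℝ) : ℝ := ∫ x in Ioi 0, exp (-s * x) * eulerKernel x

lemma eulerTransform_nonneg (s : ℝ) : 0 ≤ eulerTransform s :=
  setIntegral_nonneg measurableSet_Ioi fun _ hx => mul_nonneg (exp_pos _).le (eulerKernel_nonneg hx)

lemma eulerTransform_le_inv {s : ℝ} (hs : 0 < s) : eulerTransform s ≤ s⁻¹ := by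
  rw [← integral_exp_neg_mul_Ioi_zero hs]
  exact setIntegral_mono_on (integrableOn_exp_neg_mul_eulerKernel hs)
    (exp_neg_integrableOn_Ioi 0 hs) measurableSet_Ioi
    fun x hx => mul_le_of_le_one_right (exp_pos _).le (eulerKernel_le_one hx)

lemma exp_neg_mul_eulerKernel_sub {x : ℝ} (hx : 0 < x) (s : ℝ) :
    exp (-s * x) * eulerKernel x - exp (-(s + 1) * x) * eulerKernel x
      = exp (-s * x) - x⁻¹ * (exp (-s * x) - exp (-(s + 1) * x)) := by
  have hsplit : exp (-(s + 1) * x) = exp (-s * x) * exp (-x) := by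
    rw [← exp_add]; ring_nf
  have hpos := one_sub_exp_neg_pos hx
  rw [hsplit, eulerKernel]
  field_simp

lemma eulerTransform_sub_eulerTransform_add_one {s : ℝ} (hs : 0 < s) :
    eulerTransform s - eulerTransform (s + 1) = s⁻¹ - log ((s + 1) / s) := by
  have hs1 : 0 < s + 1 := by linarith
  rw [eulerTransform, eulerTransform, ← integral_sub (integrableOn_exp_neg_mul_eulerKernel hs)
    (integrableOn_exp_neg_mul_eulerKernel hs1),
    setIntegral_congr_fun measurableSet_Ioi fun x hx => exp_neg_mul_eulerKernel_sub hx s,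
    integral_sub (exp_neg_integrableOn_Ioi 0 hs) (integrableOn_inv_mul_exp_neg_mul_sub hs hs1),
    integral_exp_neg_mul_Ioi_zero hs, integral_inv_mul_exp_neg_mul_sub hs hs1]

lemma eulerTransform_one_sub_eulerTransform_nat_add_one (n : ℕ) :
    eulerTransform 1 - eulerTransform (n + 1) = harmonic n - log (n + 1) := by
  induction n with
  | zero => simp
  | succ n ih =>
    have hstep := eulerTransform_sub_eulerTransform_add_one (s := n + 1) (by positivity)
    rw [log_div (by positivity) (by positivity)] at hstep
    push_cast [harmonic_succ]
    linarith

lemma eulerTransform_one : eulerTransform 1 = eulerMascheroniConstant := by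
  have hrem : Tendsto (fun n : ℕ => eulerTransform (n + 1)) atTop (𝓝 0) :=
    tendsto_of_tendsto_of_tendsto_of_le_of_le tendsto_const_nhds
      (by simpa only [one_div] using (tendsto_one_div_add_atTop_nhds_zero_nat (𝕜 := ℝ)))
      (fun n => eulerTransform_nonneg _) (fun n => eulerTransform_le_inv (by positivity))
  have hlim := tendsto_harmonic_sub_log_add_one.add hrem
  simp_rw [← eulerTransform_one_sub_eulerTransform_nat_add_one, sub_add_cancel, add_zero] at hlim
  exact tendsto_nhds_unique tendsto_const_nhds hlim

noncomputable def negLogOneSubExpNeg (x : ℝ) : ℝ := -log (1 - exp (-x))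

lemma exp_neg_negLogOneSubExpNeg {x : ℝ} (hx : 0 < x) :
    exp (-negLogOneSubExpNeg x) = 1 - exp (-x) := by
  rw [negLogOneSubExpNeg, neg_neg, exp_log (one_sub_exp_neg_pos hx)]

lemma negLogOneSubExpNeg_pos {x : ℝ} (hx : 0 < x) : 0 < negLogOneSubExpNeg x :=
  neg_pos.2 <| log_neg (one_sub_exp_neg_pos hx) (by linarith [exp_pos (-x)])

lemma negLogOneSubExpNeg_negLogOneSubExpNeg {x : ℝ} (hx : 0 < x) :
    negLogOneSubExpNeg (negLogOneSubExpNeg x) = x := by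
  rw [negLogOneSubExpNeg, exp_neg_negLogOneSubExpNeg hx, sub_sub_cancel, log_exp, neg_neg]

lemma bijOn_negLogOneSubExpNeg : BijOn negLogOneSubExpNeg (Ioi 0) (Ioi 0) :=
  InvOn.bijOn ⟨fun _ hx => negLogOneSubExpNeg_negLogOneSubExpNeg hx,
      fun _ hx => negLogOneSubExpNeg_negLogOneSubExpNeg hx⟩
    (fun _ hx => negLogOneSubExpNeg_pos hx) (fun _ hx => negLogOneSubExpNeg_pos hx)

lemma hasDerivAt_negLogOneSubExpNeg {x : ℝ} (hx : 0 < x) :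
    HasDerivAt negLogOneSubExpNeg (-(exp (-x) / (1 - exp (-x)))) x := by
  exact ((((hasDerivAt_id x).neg.exp).const_sub 1).log (one_sub_exp_neg_pos hx).ne').neg.congr_deriv
    (by simp)

theorem integral_one_sub_f_eq_eulerMascheroni :
    ∫ t in Set.Ioi (0 : ℝ),
        (1 - Real.exp (-t) / (-Real.log (1 - Real.exp (-t))))
      = Real.eulerMascheroniConstant := by
  rw [← eulerTransform_one, ← bijOn_negLogOneSubExpNeg.image_eq,
    integral_image_eq_integral_abs_deriv_smul measurableSet_Ioi
      (fun x hx => (hasDerivAt_negLogOneSubExpNeg hx).hasDerivWithinAt)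
      bijOn_negLogOneSubExpNeg.injOn]
  refine setIntegral_congr_fun measurableSet_Ioi fun x (hx : 0 < x) => ?_
  have hpos := one_sub_exp_neg_pos hx
  rw [exp_neg_negLogOneSubExpNeg hx, sub_sub_cancel, log_exp, neg_neg, abs_neg,
    abs_of_pos (div_pos (exp_pos _) hpos), smul_eq_mul, eulerKernel, neg_one_mul]
  field_simp
end
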